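/- Let g₁, …, gₙ ∈ ℝ^k with max_i ‖gᵢ‖ ≤ Z, let w₁, …, wₙ ≥ 0 with ∑wᵢ = 1, and suppose α ∈ ℝ^k satisfies 1 + α^T gᵢ > 0 for all i with wᵢ > 0 and ∑ᵢ wᵢ gᵢ/(1 + α^T gᵢ) = 0. Write α = ρ v with ‖v‖ = 1, ρ = ‖α‖ ≥ 0. Then ρ · (v^T V v)/(1 + ρ Z) ≤ ‖A‖, where A = ∑ᵢ wᵢ gᵢ and V = ∑ᵢ wᵢ gᵢ gᵢ^T. Consequently, if v^T V v > ‖A‖·Z, then ρ ≤ ‖A‖/(v^T V v − ‖A‖ Z). -/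

import Mathlib

/-!
Write `tᵢ = ⟪v, gᵢ⟫`, so that `⟪α, gᵢ⟫ = ρ tᵢ`. Since `t - t / (1 + ρ t) = ρ t² / (1 + ρ t)`,
subtracting the first-order condition projected onto `v` from `⟪v, A⟫ = ∑ wᵢ tᵢ` gives
`⟪v, A⟫ = ρ ∑ wᵢ tᵢ² / (1 + ρ tᵢ)`. Every denominator lies in `(0, 1 + ρ Z]`, and `⟪v, A⟫ ≤ ‖A‖`.
-/

open MeasureTheory RealInnerProductSpace

lemma mul_sub_div_one_add_mul_mul {w s t : ℝ} (h : 1 + s * t ≠ 0) :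
    w * t - w / (1 + s * t) * t = s * (w * t ^ 2) / (1 + s * t) := by
  rw [eq_div_iff h, sub_mul, div_mul_eq_mul_div, div_mul_cancel₀ _ h]
  ring

lemma mul_sum_mul_sq_div_le_sum_mul {ι : Type*} [Fintype ι] (w t : ι → ℝ) (ρ Z : ℝ)
    (hw : ∀ i, 0 ≤ w i) (hρ : 0 ≤ ρ) (htZ : ∀ i, t i ≤ Z)
    (hpos : ∀ i, 0 < w i → 0 < 1 + ρ * t i)
    (hEL : ∑ i, w i / (1 + ρ * t i) * t i = 0) :
    ρ * (∑ i, w i * t i ^ 2) / (1 + ρ * Z) ≤ ∑ i, w i * t i := by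
  have hsum : ∑ i, w i * t i = ∑ i, ρ * (w i * t i ^ 2) / (1 + ρ * t i) := by
    rw [← sub_zero (∑ i, w i * t i), ← hEL, ← Finset.sum_sub_distrib]
    refine Finset.sum_congr rfl fun i _ => ?_
    rcases (hw i).lt_or_eq with hwi | hwi
    · exact mul_sub_div_one_add_mul_mul (hpos i hwi).ne'
    · simp [← hwi]
  rw [hsum, mul_div_assoc, Finset.sum_div, Finset.mul_sum]
  refine Finset.sum_le_sum fun i _ => ?_
  rcases (hw i).lt_or_eq with hwi | hwi
  · rw [← mul_div_assoc]
    exact div_le_div_of_nonneg_left (by positivity) (hpos i hwi)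
      (by nlinarith [htZ i])
  · simp [← hwi]

lemma le_div_sub_of_mul_div_le {ρ V a Z : ℝ} (hden : 0 < 1 + ρ * Z)
    (h : ρ * V / (1 + ρ * Z) ≤ a) (hlt : a * Z < V) : ρ ≤ a / (V - a * Z) := by
  rw [div_le_iff₀ hden] at h
  rw [le_div_iff₀ (by linarith)]
  linarith

theorem stmt9_general {k n : ℕ} (g : Fin n → EuclideanSpace ℝ (Fin k))
    (w : Fin n → ℝ) (hw : ∀ i, 0 ≤ w i)
    (Z : ℝ) (hZ : 0 ≤ Z) (hgZ : ∀ i, ‖g i‖ ≤ Z)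
    (α v : EuclideanSpace ℝ (Fin k)) (ρ : ℝ) (hv : ‖v‖ = 1) (hρ : ρ = ‖α‖)
    (hαv : α = ρ • v)
    (hpos : ∀ i, 0 < w i → 0 < 1 + ⟪α, g i⟫)
    (hEL : ∑ i, (w i / (1 + ⟪α, g i⟫)) • g i = 0)
    (A : EuclideanSpace ℝ (Fin k)) (hA : A = ∑ i, w i • g i)
    (Vq : ℝ) (hVq : Vq = ∑ i, w i * ⟪v, g i⟫ ^ 2) :
    ρ * Vq / (1 + ρ * Z) ≤ ‖A‖ ∧
      (‖A‖ * Z < Vq → ρ ≤ ‖A‖ / (Vq - ‖A‖ * Z)) := by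
  have hρ0 : 0 ≤ ρ := hρ ▸ norm_nonneg α
  have hinner_le (x : EuclideanSpace ℝ (Fin k)) : ⟪v, x⟫ ≤ ‖x‖ := by
    simpa [hv] using real_inner_le_norm v x
  have hαg (i : Fin n) : ⟪α, g i⟫ = ρ * ⟪v, g i⟫ := by rw [hαv, real_inner_smul_left]
  simp only [hαg] at hpos hEL
  have hEL_v : ∑ i, w i / (1 + ρ * ⟪v, g i⟫) * ⟪v, g i⟫ = 0 := by
    simpa only [inner_sum, real_inner_smul_right, inner_zero_right] using congrArg (⟪v, ·⟫) hEL
  have hvA : ⟪v, A⟫ = ∑ i, w i * ⟪v, g i⟫ := by simp only [hA, inner_sum, real_inner_smul_right]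
  have hmain : ρ * Vq / (1 + ρ * Z) ≤ ‖A‖ :=
    calc ρ * Vq / (1 + ρ * Z) ≤ ⟪v, A⟫ :=
          hVq ▸ hvA ▸ mul_sum_mul_sq_div_le_sum_mul w (⟪v, g ·⟫) ρ Z hw hρ0
            (fun i => (hinner_le (g i)).trans (hgZ i)) hpos hEL_v
      _ ≤ ‖A‖ := hinner_le A
  exact ⟨hmain, le_div_sub_of_mul_div_le (by positivity) hmain⟩

/-- Owen-type bound on the empirical likelihood Lagrange multiplier: if
`α = ρ v` (`‖v‖ = 1`, `ρ = ‖α‖`) satisfies `1 + αᵀgᵢ > 0` (for `wᵢ > 0`) and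
`∑ᵢ wᵢ gᵢ/(1 + αᵀgᵢ) = 0`, then `ρ (vᵀ V v)/(1 + ρ Z) ≤ ‖A‖`, and if moreover
`vᵀ V v > ‖A‖ Z` then `ρ ≤ ‖A‖/(vᵀ V v − ‖A‖ Z)`. -/
theorem stmt9 {k n : ℕ} (g : Fin n → EuclideanSpace ℝ (Fin k))
    (w : Fin n → ℝ) (hw : ∀ i, 0 ≤ w i) (hw1 : ∑ i, w i = 1)
    (Z : ℝ) (hZ : 0 ≤ Z) (hgZ : ∀ i, ‖g i‖ ≤ Z)
    (α v : EuclideanSpace ℝ (Fin k)) (ρ : ℝ) (hv : ‖v‖ = 1) (hρ : ρ = ‖α‖)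
    (hαv : α = ρ • v)
    (hpos : ∀ i, 0 < w i → 0 < 1 + ⟪α, g i⟫)
    (hEL : ∑ i, (w i / (1 + ⟪α, g i⟫)) • g i = 0)
    (A : EuclideanSpace ℝ (Fin k)) (hA : A = ∑ i, w i • g i)
    (Vq : ℝ) (hVq : Vq = ∑ i, w i * ⟪v, g i⟫ ^ 2) :
    ρ * Vq / (1 + ρ * Z) ≤ ‖A‖ ∧
      (‖A‖ * Z < Vq → ρ ≤ ‖A‖ / (Vq - ‖A‖ * Z)) :=
  stmt9_general g w hw Z hZ hgZ α v ρ hv hρ hαv hpos hEL A hA Vq hVq
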